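/- arXiv:2103.13828 — 3 statements merged into one kernel-verified Lean document; each statement's English description precedes it below -/
import Mathlib

section
/- For all nonnegative integers n and positive integers k, if the higher-order Daehee numbers D_n^{(k)} are defined by the exponential generating function (log(1+t)/t)^k = ∑_{n≥0} D_n^{(k)} t^n/n!, then D_n^{(k)} = s(n+k, k) / C(n+k, k), where s denotes the signed Stirling numbers of the first kind and C(n+k,k) is the binomial coefficient. -/
open Nat
/-- `log(1+t) = ∑_{n≥1} (-1)^{n+1} t^n / n` as a formal power series over `ℚ`. -/
noncomputable def logOneAdd : PowerSeries ℚ :=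
  PowerSeries.mk fun n => if n = 0 then 0 else (-1 : ℚ) ^ (n + 1) / n

/-!
Put `L = log(1+t)`. From `(1+t) L' = 1` we get `(1+t) (L^(k+1))' = (k+1) L^k`, so the numbers
`N! [t^N] L^k / k!` satisfy `a(N+1, k+1) = a(N, k) - N a(N, k+1)`. This is the recurrence read off
from `(x)_(N+1) = (x)_N (x - N)` for the coefficients `s(N, k)` of `x^k` in `(x)_N`, and the
initial values agree, hence `N! [t^N] L^k = k! s(N, k)`. Taking `N = n + k` and dividing by
`(n+k)! / n! = k! C(n+k, k)` gives the theorem.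
-/

open PowerSeries

theorem PowerSeries.coeff_X_mul_derivative {R : Type*} [CommSemiring R] (f : R⟦X⟧) (n : ℕ) :
    coeff n (X * d⁄dX R f) = n * coeff n f := by
  rcases n with _ | n
  · simp
  · rw [coeff_succ_X_mul, coeff_derivative, Nat.cast_succ, mul_comm]

theorem Polynomial.coeff_sum_range_C_mul_X_pow {R : Type*} [Semiring R] (a : ℕ → R)
    {n k : ℕ} (hk : k < n) :
    (∑ m ∈ Finset.range n, Polynomial.C (a m) * Polynomial.X ^ m).coeff k = a k := by
  simp [hk]

section descPochhammer

variable (R : Type*) [CommRing R]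

theorem coeff_descPochhammer_succ_zero (N : ℕ) : (descPochhammer R (N + 1)).coeff 0 = 0 := by
  rw [Polynomial.coeff_zero_eq_eval_zero, descPochhammer_ne_zero_eval_zero _ N.succ_ne_zero]

theorem coeff_descPochhammer_succ_succ (N m : ℕ) :
    (descPochhammer R (N + 1)).coeff (m + 1) =
      (descPochhammer R N).coeff m - N * (descPochhammer R N).coeff (m + 1) := by
  rw [descPochhammer_succ_right, mul_sub, Polynomial.coeff_sub, Polynomial.coeff_mul_X,
    ← Polynomial.C_eq_natCast, Polynomial.coeff_mul_C, mul_comm]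

end descPochhammer

theorem constantCoeff_logOneAdd : constantCoeff logOneAdd = 0 := by
  simp [logOneAdd]

theorem coeff_derivative_logOneAdd (n : ℕ) : coeff n (d⁄dX ℚ logOneAdd) = (-1) ^ n := by
  rw [coeff_derivative, logOneAdd, coeff_mk, if_neg n.succ_ne_zero]
  field_simp
  push_cast
  ring

theorem one_add_X_mul_derivative_logOneAdd : (1 + X) * d⁄dX ℚ logOneAdd = 1 := by
  ext n
  rcases n with _ | n
  · rw [coeff_zero_eq_constantCoeff, map_mul, ← coeff_zero_eq_constantCoeff,
      coeff_derivative_logOneAdd]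
    simp
  · rw [add_mul, one_mul, map_add, coeff_succ_X_mul, coeff_derivative_logOneAdd,
      coeff_derivative_logOneAdd, coeff_one, pow_succ]
    simp

theorem one_add_X_mul_derivative_logOneAdd_pow (m : ℕ) :
    (1 + X) * d⁄dX ℚ (logOneAdd ^ (m + 1)) = (m + 1 : ℚ) • logOneAdd ^ m := by
  rw [Derivation.leibniz_pow, Nat.add_sub_cancel, smul_eq_mul, mul_smul_comm, mul_left_comm,
    one_add_X_mul_derivative_logOneAdd, mul_one, ← Nat.cast_smul_eq_nsmul ℚ, Nat.cast_succ]

theorem coeff_logOneAdd_pow_succ_succ (N m : ℕ) :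
    (N + 1 : ℚ) * coeff (N + 1) (logOneAdd ^ (m + 1)) =
      (m + 1) * coeff N (logOneAdd ^ m) - N * coeff N (logOneAdd ^ (m + 1)) := by
  have h := congrArg (coeff N) (one_add_X_mul_derivative_logOneAdd_pow m)
  rw [add_mul, one_mul, map_add, coeff_X_mul_derivative, coeff_derivative, coeff_smul,
    smul_eq_mul] at h
  linear_combination h

theorem factorial_mul_coeff_logOneAdd_pow (N k : ℕ) :
    (N ! : ℚ) * coeff N (logOneAdd ^ k) = k ! * (descPochhammer ℚ N).coeff k := by
  induction N generalizing k with
  | zero =>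
    rcases k with _ | k
    · simp
    · simp [constantCoeff_logOneAdd, Polynomial.coeff_one]
  | succ N ih =>
    rcases k with _ | m
    · simp [coeff_descPochhammer_succ_zero, coeff_one]
    · have ih_succ := ih (m + 1)
      rw [Nat.factorial_succ m] at ih_succ
      rw [coeff_descPochhammer_succ_succ, Nat.factorial_succ, Nat.factorial_succ]
      push_cast at ih_succ ⊢
      linear_combination (N ! : ℚ) * coeff_logOneAdd_pow_succ_succ N m
        + (m + 1 : ℚ) * ih m - N * ih_succ

theorem daehee_higher_order_eq_stirling_div_choose_general
    (k : ℕ) (D : ℕ → ℚ) (s : ℕ → ℕ → ℚ)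
    (hD : ∀ n : ℕ, PowerSeries.coeff (n + k) (logOneAdd ^ k) = D n / (n ! : ℚ))
    (hs : ∀ N : ℕ, descPochhammer ℚ N =
      ∑ m ∈ Finset.range (N + 1), Polynomial.C (s N m) * Polynomial.X ^ m) :
    ∀ n : ℕ, D n = s (n + k) k / ((n + k).choose k : ℚ) := by
  intro n
  have hcoeff := factorial_mul_coeff_logOneAdd_pow (n + k) k
  rw [hD n, hs, Polynomial.coeff_sum_range_C_mul_X_pow _ (by omega)] at hcoeff
  rw [add_comm n k] at hcoeff ⊢
  rw [Nat.cast_add_choose]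
  field_simp at hcoeff ⊢
  linear_combination hcoeff

/-- For `n ≥ 0` and `k ≥ 1`, if the higher-order Daehee numbers `D_n^{(k)}` are defined by
`(log(1+t)/t)^k = ∑ D_n^{(k)} t^n/n!` (equivalently `log(1+t)^k = t^k · ∑ D_n^{(k)} t^n/n!`),
and `s(N,m)` are the signed Stirling numbers of the first kind, defined by
`(x)_N = ∑_m s(N,m) x^m`, then `D_n^{(k)} = s(n+k,k) / C(n+k,k)`. -/
theorem daehee_higher_order_eq_stirling_div_choose
    (k : ℕ) (hk : 1 ≤ k) (D : ℕ → ℚ) (s : ℕ → ℕ → ℚ)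
    (hD : ∀ n : ℕ, PowerSeries.coeff (n + k) (logOneAdd ^ k) = D n / (n ! : ℚ))
    (hs : ∀ N : ℕ, descPochhammer ℚ N =
      ∑ m ∈ Finset.range (N + 1), Polynomial.C (s N m) * Polynomial.X ^ m) :
    ∀ n : ℕ, D n = s (n + k) k / ((n + k).choose k : ℚ) :=
  daehee_higher_order_eq_stirling_div_choose_general k D s hD hs
end

section
/- For all nonnegative integers n and integers k, the higher-order Daehee polynomials satisfy D_n^{(k)}(x) = ∑_{ℓ=0}^n s(n,ℓ) B_ℓ^{(k)}(x), where s(n,ℓ) are signed Stirling numbers of the first kind and B_ℓ^{(k)}(x) are the Bernoulli polynomials of order k. -/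
open Nat

/-- `log(1+t)` as a formal power series with coefficients in `ℚ[x]`. -/
noncomputable def logOneAddP : PowerSeries (Polynomial ℚ) :=
  PowerSeries.mk fun n => if n = 0 then 0 else Polynomial.C ((-1 : ℚ) ^ (n + 1) / n)

/-- `(1+t)^x = ∑_n (x)_n t^n / n!` as a formal power series with coefficients in `ℚ[x]`. -/
noncomputable def onePlusTPowX : PowerSeries (Polynomial ℚ) :=
  PowerSeries.mk fun n => Polynomial.C ((n ! : ℚ)⁻¹) * descPochhammer ℚ n

/-- `e^t = ∑_n t^n / n!` as a formal power series with coefficients in `ℚ[x]`. -/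
noncomputable def expT : PowerSeries (Polynomial ℚ) :=
  PowerSeries.mk fun n => Polynomial.C ((n ! : ℚ)⁻¹)

/-- `e^{xt} = ∑_n x^n t^n / n!` as a formal power series with coefficients in `ℚ[x]`. -/
noncomputable def expXT : PowerSeries (Polynomial ℚ) :=
  PowerSeries.mk fun n => Polynomial.C ((n ! : ℚ)⁻¹) * Polynomial.X ^ n

/-!
Substituting `t ↦ log(1+t)` is a ring endomorphism of `ℚ[x]⟦t⟧`. It sends `e^{ct}` to `(1+t)^c`
for `c = 1` and `c = x`, since both sides solve `(1+t) g' = c g` with `g(0) = 1`. Hence it sends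
`t/(e^t-1)` to `log(1+t)/t`, and so the Bernoulli generating function `(t/(e^t-1))^k e^{xt}` to the
Daehee generating function `(log(1+t)/t)^k (1+t)^x`. Comparing coefficients of `x^ℓ` in
`e^{x log(1+t)} = (1+t)^x` gives `log(1+t)^ℓ/ℓ! = ∑ₙ s(n,ℓ) tⁿ/n!`, which computes the substitution
coefficientwise.
-/

namespace PowerSeries

variable {A : Type*} [CommRing A]

theorem coeff_subst_eq_sum_range {b : A⟦X⟧} (hb : constantCoeff b = 0) (f : A⟦X⟧) {n N : ℕ}
    (hN : n < N) : coeff n (f.subst b) = ∑ d ∈ Finset.range N, coeff d f * coeff n (b ^ d) := by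
  rw [coeff_subst' (HasSubst.of_constantCoeff_zero' hb)]
  refine finsum_eq_sum_of_support_subset _ fun d hd => ?_
  by_contra hdN
  have hnd : (n : ℕ∞) < (b ^ d).order :=
    (le_order_pow_of_constantCoeff_eq_zero d hb).trans_lt'
      (by simp only [Finset.coe_range, Set.mem_Iio, not_lt] at hdN; exact_mod_cast hN.trans_le hdN)
  exact hd (by simp [coeff_of_lt_order n hnd])

theorem constantCoeff_subst_of_constantCoeff_eq_zero {b : A⟦X⟧} (hb : constantCoeff b = 0)
    (f : A⟦X⟧) : constantCoeff (f.subst b) = constantCoeff f := by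
  rw [← coeff_zero_eq_constantCoeff_apply, ← coeff_zero_eq_constantCoeff_apply,
    coeff_subst_eq_sum_range hb f zero_lt_one]
  simp

theorem subst_units_zpow {b : A⟦X⟧} (hb : HasSubst b) {u v : A⟦X⟧ˣ}
    (h : (v : A⟦X⟧).subst b = u) (k : ℤ) : (↑(v ^ k) : A⟦X⟧).subst b = ↑(u ^ k) := by
  set ψ := (substAlgHom hb : A⟦X⟧ →ₐ[A] A⟦X⟧).toMonoidHom
  have hψ : ∀ f, ψ f = f.subst b := fun f => by simp [ψ, coe_substAlgHom]
  have hmap : Units.map ψ v = u := Units.ext (by simpa [hψ] using h)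
  rw [← hmap, ← map_zpow, Units.coe_map, hψ]

theorem derivative_rescale (c : A) (f : A⟦X⟧) :
    d⁄dX A (rescale c f) = C c * rescale c (d⁄dX A f) := by
  ext n
  simp only [coeff_derivative, coeff_rescale, coeff_C_mul]
  ring

theorem coeff_one_add_X_mul_derivative (f : A⟦X⟧) (n : ℕ) :
    coeff n ((1 + X) * d⁄dX A f) = coeff (n + 1) f * (n + 1) + coeff n f * n := by
  rw [add_mul, one_mul, map_add, coeff_derivative]
  rcases n with _ | n
  · simp
  · rw [coeff_succ_X_mul, coeff_derivative]
    push_cast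
    ring

theorem eq_zero_of_one_add_X_mul_derivative_eq [IsAddTorsionFree A] {c : A} {f : A⟦X⟧}
    (hf : (1 + X) * d⁄dX A f = C c * f) (hf0 : constantCoeff f = 0) : f = 0 := by
  ext n
  rw [map_zero]
  induction n with
  | zero => simpa using hf0
  | succ n ih =>
    have hn := congrArg (coeff n) hf
    rw [coeff_one_add_X_mul_derivative, coeff_C_mul, ih, zero_mul, add_zero, mul_zero, mul_comm,
      ← Nat.cast_succ, ← nsmul_eq_mul] at hn
    exact (nsmul_eq_zero_iff_right n.succ_ne_zero).mp hn

theorem eq_of_one_add_X_mul_derivative_eq [IsAddTorsionFree A] {c : A} {f g : A⟦X⟧}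
    (hf : (1 + X) * d⁄dX A f = C c * f) (hg : (1 + X) * d⁄dX A g = C c * g)
    (h0 : constantCoeff f = constantCoeff g) : f = g := by
  refine sub_eq_zero.mp (eq_zero_of_one_add_X_mul_derivative_eq (c := c) ?_ (by simp [h0]))
  rw [map_sub, mul_sub, mul_sub, hf, hg]

variable [Algebra ℚ A]

theorem one_add_X_mul_derivative_log : (1 + X) * d⁄dX A (log A) = 1 := by
  ext n
  rcases n with _ | n
  · simp [deriv_log]
  · rw [add_mul, one_mul, map_add, coeff_succ_X_mul, deriv_log]
    simp [pow_succ]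

theorem one_add_X_mul_derivative_subst_log_rescale_exp (c : A) :
    (1 + X) * d⁄dX A ((rescale c (exp A)).subst (log A)) =
      C c * (rescale c (exp A)).subst (log A) := by
  rw [derivative_subst HasSubst.log, derivative_rescale, derivative_exp, subst_mul HasSubst.log,
    subst_C]
  change (1 + X) * (C c * _ * _) = _
  linear_combination C c * (rescale c (exp A)).subst (log A) * one_add_X_mul_derivative_log (A := A)

theorem subst_log_exp : (exp A).subst (log A) = 1 + X := by
  have : IsAddTorsionFree A := .of_module_rat A
  refine eq_of_one_add_X_mul_derivative_eq (c := 1) ?_ ?_ ?_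
  · simpa [rescale_one] using one_add_X_mul_derivative_subst_log_rescale_exp (1 : A)
  · simp
  · simp [constantCoeff_subst_of_constantCoeff_eq_zero constantCoeff_log]

theorem subst_log_eq_of_mul_exp_sub_one_eq_X {u v : A⟦X⟧} (hu : X * u = log A)
    (hv : v * (exp A - 1) = X) : v.subst (log A) = u := by
  have h := congrArg (substAlgHom (HasSubst.log (A := A))) hv
  simp only [map_mul, map_sub, map_one, coe_substAlgHom] at h
  rw [subst_log_exp, subst_X HasSubst.log, add_sub_cancel_left, mul_comm] at h
  exact X_mul_cancel (h.trans hu.symm)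

end PowerSeries

theorem Polynomial.coeff_eq_of_eq_sum_range {R : Type*} [Semiring R] {p : Polynomial R} {N : ℕ}
    {c : ℕ → R} (hp : p = ∑ m ∈ Finset.range (N + 1), C (c m) * X ^ m) {ℓ : ℕ} (hℓ : ℓ ≤ N) :
    p.coeff ℓ = c ℓ := by
  simp [hp, Polynomial.finsetSum_coeff, Nat.lt_succ_of_le hℓ]

open PowerSeries

theorem logOneAddP_eq_log : logOneAddP = log (Polynomial ℚ) := by
  ext n : 1
  simp [logOneAddP]

theorem expT_eq_exp : expT = exp (Polynomial ℚ) := by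
  ext n : 1
  simp [expT]

theorem expXT_eq_rescale_exp : expXT = rescale Polynomial.X (exp (Polynomial ℚ)) := by
  ext n : 1
  simp only [expXT, coeff_mk, coeff_rescale, coeff_exp, Polynomial.algebraMap_apply]
  rw [mul_comm]
  simp

theorem one_add_X_mul_derivative_onePlusTPowX :
    (1 + X) * d⁄dX (Polynomial ℚ) onePlusTPowX =
      C (Polynomial.X : Polynomial ℚ) * onePlusTPowX := by
  ext n : 1
  have hfac : Polynomial.C (((n + 1)! : ℚ)⁻¹) * ((n : Polynomial ℚ) + 1) =
      Polynomial.C ((n ! : ℚ)⁻¹) := by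
    have : (((n + 1)! : ℚ)⁻¹) * ((n : ℚ) + 1) = (n ! : ℚ)⁻¹ := by
      rw [Nat.factorial_succ]
      push_cast
      field_simp
    simpa using congrArg Polynomial.C this
  rw [coeff_one_add_X_mul_derivative, coeff_C_mul]
  simp only [onePlusTPowX, coeff_mk, descPochhammer_succ_right]
  linear_combination (descPochhammer ℚ n * ((Polynomial.X : Polynomial ℚ) - n)) * hfac

theorem subst_log_expXT : expXT.subst (log (Polynomial ℚ)) = onePlusTPowX := by
  rw [expXT_eq_rescale_exp]
  refine eq_of_one_add_X_mul_derivative_eq (one_add_X_mul_derivative_subst_log_rescale_exp _)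
    one_add_X_mul_derivative_onePlusTPowX ?_
  rw [constantCoeff_subst_of_constantCoeff_eq_zero constantCoeff_log,
    ← coeff_zero_eq_constantCoeff_apply, ← coeff_zero_eq_constantCoeff_apply]
  simp [onePlusTPowX]

namespace PowerSeries

variable {A : Type*} [CommRing A] [Algebra ℚ A]

theorem coeff_log_pow (n ℓ : ℕ) :
    coeff n (log A ^ ℓ) = algebraMap ℚ A (ℓ ! / n ! * (descPochhammer ℚ n).coeff ℓ) := by
  rw [← map_log (algebraMap ℚ A), ← map_pow, coeff_map]
  congr 1
  have hterm : ∀ d, coeff d expXT * coeff n (log (Polynomial ℚ) ^ d) =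
      Polynomial.C ((d ! : ℚ)⁻¹ * coeff n (log ℚ ^ d)) * Polynomial.X ^ d := by
    intro d
    rw [← map_log Polynomial.C, ← map_pow, coeff_map, expXT, coeff_mk, map_mul]
    ring
  -- the coefficient of `x^ℓ tⁿ` in `e^{x log(1+t)} = (1+t)^x`
  have h := congrArg (fun p => Polynomial.coeff (coeff n p) ℓ) subst_log_expXT
  beta_reduce at h
  rw [coeff_subst_eq_sum_range constantCoeff_log _ (N := n + ℓ + 1) (by omega)] at h
  simp only [hterm, Polynomial.finsetSum_coeff, onePlusTPowX, coeff_mk] at h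
  simp only [Polynomial.coeff_C_mul_X_pow] at h
  simp only [Finset.sum_ite_eq, Finset.mem_range, Polynomial.coeff_C_mul,
    if_pos (show ℓ < n + ℓ + 1 by omega)] at h
  rw [inv_mul_eq_iff_eq_mul₀ (by positivity)] at h
  rw [h]
  ring

theorem coeff_subst_log (f : A⟦X⟧) (n : ℕ) :
    coeff n (f.subst (log A)) = ∑ ℓ ∈ Finset.range (n + 1),
      algebraMap ℚ A (ℓ ! / n ! * (descPochhammer ℚ n).coeff ℓ) * coeff ℓ f := by
  rw [coeff_subst_eq_sum_range constantCoeff_log f n.lt_succ_self]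
  simp_rw [coeff_log_pow, mul_comm]

end PowerSeries

/-- For `n ≥ 0` and `k ∈ ℤ`: if `u = log(1+t)/t` and `v = t/(e^t-1)` (as units of the ring
of power series over `ℚ[x]`), the higher-order Daehee polynomials are defined by
`(log(1+t)/t)^k (1+t)^x = ∑ D_n^{(k)}(x) t^n/n!`, the Bernoulli polynomials of order `k`
by `(t/(e^t-1))^k e^{xt} = ∑ B_n^{(k)}(x) t^n/n!`, and `s(N,ℓ)` are the signed Stirling
numbers of the first kind (`(x)_N = ∑_ℓ s(N,ℓ) x^ℓ`), then
`D_n^{(k)}(x) = ∑_{ℓ=0}^n s(n,ℓ) B_ℓ^{(k)}(x)`. -/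
theorem daehee_poly_eq_stirling_sum_bernoulli_poly
    (k : ℤ) (D B : ℕ → Polynomial ℚ) (s : ℕ → ℕ → ℚ)
    (u v : (PowerSeries (Polynomial ℚ))ˣ)
    (hu : PowerSeries.X * (u : PowerSeries (Polynomial ℚ)) = logOneAddP)
    (hv : (v : PowerSeries (Polynomial ℚ)) * (expT - 1) = PowerSeries.X)
    (hD : ∀ n : ℕ, PowerSeries.coeff n
        (((u ^ k : (PowerSeries (Polynomial ℚ))ˣ) : PowerSeries (Polynomial ℚ)) * onePlusTPowX)
        = Polynomial.C ((n ! : ℚ)⁻¹) * D n)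
    (hB : ∀ n : ℕ, PowerSeries.coeff n
        (((v ^ k : (PowerSeries (Polynomial ℚ))ˣ) : PowerSeries (Polynomial ℚ)) * expXT)
        = Polynomial.C ((n ! : ℚ)⁻¹) * B n)
    (hs : ∀ N : ℕ, descPochhammer ℚ N =
      ∑ m ∈ Finset.range (N + 1), Polynomial.C (s N m) * Polynomial.X ^ m) :
    ∀ n : ℕ, D n = ∑ ℓ ∈ Finset.range (n + 1), Polynomial.C (s n ℓ) * B ℓ := by
  intro n
  have hvu : (v : PowerSeries (Polynomial ℚ)).subst (log (Polynomial ℚ)) = u :=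
    subst_log_eq_of_mul_exp_sub_one_eq_X (hu.trans logOneAddP_eq_log) (expT_eq_exp ▸ hv)
  have hn := hD n
  rw [← subst_units_zpow HasSubst.log hvu, ← subst_log_expXT, ← subst_mul HasSubst.log,
    coeff_subst_log] at hn
  refine mul_left_cancel₀ (by simp [Nat.factorial_ne_zero] : Polynomial.C ((n ! : ℚ)⁻¹) ≠ 0) ?_
  rw [← hn, Finset.mul_sum]
  refine Finset.sum_congr rfl fun ℓ hℓ => ?_
  rw [hB, Polynomial.coeff_eq_of_eq_sum_range (hs n) (Nat.lt_succ_iff.mp (Finset.mem_range.mp hℓ))]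
  simp only [← mul_assoc, Polynomial.algebraMap_eq, ← Polynomial.C_mul]
  congr 2
  field_simp
end

section
/- Let ᾱ = (α_0,…,α_{n-1}) be real numbers and r̄ = (r_0,…,r_{n-1}) nonnegative integers with |r| = r_0+⋯+r_{n-1}. Define the generalized Comtet numbers of the first kind s_ᾱ(n,i;r̄) by ∏_{i=0}^{n-1}(x-α_i)^{r_i} = ∑_{i=0}^{|r|} s_ᾱ(n,i;r̄) x^i. Then for positive reals ℓ_1,…,ℓ_k, the k-fold iterated integral ∫_0^{ℓ_1}⋯∫_0^{ℓ_k} ∏_{i=0}^{n-1}(x_1⋯x_k - α_i)^{r_i} dx_1⋯dx_k equals ∑_{j=0}^{|r|} s_ᾱ(n,j;r̄) · (ℓ_1 ℓ_2 ⋯ ℓ_k)^{j+1}/(j+1)^k. -/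
/-! With `x_1` fixed, `∑_j c_j (x_1 x_2 ⋯ x_k)^j` is a polynomial in the product `x_2 ⋯ x_k`
with coefficients `c_j x_1^j`, so an induction on `k` with arbitrary coefficients integrates every
polynomial in `x_1 ⋯ x_k`: each of the `k` integrations multiplies the `j`-th term by
`ℓ_i^{j+1}/(j+1)`. The Comtet expansion turns the integrand into such a polynomial. -/

/-- The `k`-fold iterated integral `∫_0^{ℓ_1} ⋯ ∫_0^{ℓ_k} f(x_1,…,x_k) dx_k ⋯ dx_1`. -/
noncomputable def iteratedIntegral : (k : ℕ) → (Fin k → ℝ) → ((Fin k → ℝ) → ℝ) → ℝ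
  | 0, _, f => f (fun i => i.elim0)
  | k + 1, ℓ, f =>
      ∫ x in (0:ℝ)..(ℓ 0), iteratedIntegral k (fun i => ℓ i.succ) (fun y => f (Fin.cons x y))

open Finset

lemma integral_sum_pow_mul (a : ℝ) (m : ℕ) (d : ℕ → ℝ) :
    ∫ x in (0:ℝ)..a, ∑ j ∈ range m, x ^ j * d j =
      ∑ j ∈ range m, a ^ (j + 1) / ((j : ℝ) + 1) * d j := by
  rw [intervalIntegral.integral_finsetSum fun j _ =>
    (by fun_prop : Continuous fun x : ℝ => x ^ j * d j).intervalIntegrable _ _]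
  refine sum_congr rfl fun j _ => ?_
  rw [intervalIntegral.integral_mul_const, integral_pow]
  ring

lemma sum_mul_prod_cons_pow {k m : ℕ} (c : ℕ → ℝ) (x : ℝ) (y : Fin k → ℝ) :
    ∑ j ∈ range m, c j * (∏ i, (Fin.cons x y : Fin (k + 1) → ℝ) i) ^ j =
      ∑ j ∈ range m, (c j * x ^ j) * (∏ i, y i) ^ j := by
  refine sum_congr rfl fun j _ => ?_
  rw [Fin.prod_cons, mul_pow]
  ring

lemma iteratedIntegral_sum_mul_prod_pow (k : ℕ) (ℓ : Fin k → ℝ) (m : ℕ) (c : ℕ → ℝ) :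
    iteratedIntegral k ℓ (fun x => ∑ j ∈ range m, c j * (∏ i, x i) ^ j) =
      ∑ j ∈ range m, c j * (∏ i, ℓ i) ^ (j + 1) / ((j : ℝ) + 1) ^ k := by
  induction k generalizing c with
  | zero => simp [iteratedIntegral]
  | succ k ih =>
    have inner (x : ℝ) :
        iteratedIntegral k (fun i : Fin k => ℓ i.succ)
            (fun y => ∑ j ∈ range m, c j * (∏ i, (Fin.cons x y : Fin (k + 1) → ℝ) i) ^ j) =
          ∑ j ∈ range m,
            x ^ j * (c j * (∏ i : Fin k, ℓ i.succ) ^ (j + 1) / ((j : ℝ) + 1) ^ k) := by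
      simp only [sum_mul_prod_cons_pow, ih]
      exact sum_congr rfl fun j _ => by ring
    rw [iteratedIntegral]
    simp only [inner, integral_sum_pow_mul]
    refine sum_congr rfl fun j _ => ?_
    rw [Fin.prod_univ_succ]
    have hj : (j : ℝ) + 1 ≠ 0 := by positivity
    field_simp
    ring

theorem iteratedIntegral_generalized_factorial_general
    (k n : ℕ) (α : ℕ → ℝ) (r : ℕ → ℕ) (sA : ℕ → ℝ)
    (hsA : ∀ x : ℝ, (∏ i ∈ Finset.range n, (x - α i) ^ (r i)) =
      ∑ j ∈ Finset.range ((∑ i ∈ Finset.range n, r i) + 1), sA j * x ^ j)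
    (ℓ : Fin k → ℝ) :
    iteratedIntegral k ℓ (fun x => ∏ i ∈ Finset.range n, ((∏ j, x j) - α i) ^ (r i)) =
      ∑ j ∈ Finset.range ((∑ i ∈ Finset.range n, r i) + 1),
        sA j * (∏ i, ℓ i) ^ (j + 1) / ((j : ℝ) + 1) ^ k := by
  simp only [hsA]
  exact iteratedIntegral_sum_mul_prod_pow k ℓ _ sA

/-- Let `ᾱ = (α_0,…,α_{n-1})` be reals, `r̄ = (r_0,…,r_{n-1})` nonnegative integers with
`|r| = r_0 + ⋯ + r_{n-1}`, and let the generalized Comtet numbers of the first kind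
`s_ᾱ(n,j;r̄)` be defined by `∏_{i<n} (x - α_i)^{r_i} = ∑_{j=0}^{|r|} s_ᾱ(n,j;r̄) x^j`.
Then for positive reals `ℓ_1,…,ℓ_k`,
`∫_0^{ℓ_1}⋯∫_0^{ℓ_k} ∏_{i<n} (x_1⋯x_k - α_i)^{r_i} dx_1⋯dx_k
  = ∑_{j=0}^{|r|} s_ᾱ(n,j;r̄) (ℓ_1⋯ℓ_k)^{j+1}/(j+1)^k`. -/
theorem iteratedIntegral_generalized_factorial
    (k n : ℕ) (α : ℕ → ℝ) (r : ℕ → ℕ) (sA : ℕ → ℝ)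
    (hsA : ∀ x : ℝ, (∏ i ∈ Finset.range n, (x - α i) ^ (r i)) =
      ∑ j ∈ Finset.range ((∑ i ∈ Finset.range n, r i) + 1), sA j * x ^ j)
    (ℓ : Fin k → ℝ) (hℓ : ∀ i, 0 < ℓ i) :
    iteratedIntegral k ℓ (fun x => ∏ i ∈ Finset.range n, ((∏ j, x j) - α i) ^ (r i)) =
      ∑ j ∈ Finset.range ((∑ i ∈ Finset.range n, r i) + 1),
        sA j * (∏ i, ℓ i) ^ (j + 1) / ((j : ℝ) + 1) ^ k :=
  iteratedIntegral_generalized_factorial_general k n α r sA hsA ℓ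
end
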